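/- arXiv:math/9805150 — 3 statements merged into one kernel-verified Lean document; each statement's English description precedes it below -/
import Mathlib

section
/- Fix an integer k > 2 and define the pair coloring c({m,n}) = Pr(I(m,n), d(m,n)). Then c is regressive on the interval [4k², f_k(4k²)): for all m, n with 4k² ≤ m < n < f_k(4k²), c({m,n}) < m. -/
/-- `f i` for `i ≥ 1`: `f 1 n = n + 1`, `f (i+1) n = (f i)^[⌊√n/2⌋] n`. -/
def f : ℕ → ℕ → ℕ
  | 0, n => n
  | 1, n => n + 1
  | i + 2, n => (f (i + 1))^[Nat.sqrt n / 2] n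

/-- `d k i m n = |{l : m < f_i^(l)(4k²) ≤ n}|`. -/
noncomputable def d (k i m n : ℕ) : ℕ :=
  {l : ℕ | m < (f i)^[l] (4 * k ^ 2) ∧ (f i)^[l] (4 * k ^ 2) ≤ n}.ncard

/-- `I k m n` is the greatest `i ≥ 1` with `d k i m n > 0`. -/
noncomputable def I (k m n : ℕ) : ℕ := sSup {i : ℕ | 1 ≤ i ∧ 0 < d k i m n}

/-- `D k m n = d_{I(m,n)}(m,n)`. -/
noncomputable def D (k m n : ℕ) : ℕ := d k (I k m n) m n

/-- The standard pairing function `Pr(m,n) = C(m+n+1,2) + n`. -/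
def Pr (m n : ℕ) : ℕ := (m + n + 1).choose 2 + n

/-- The coloring `c({m,n}) = Pr(I(m,n), d(m,n))` (on pairs `m < n`). -/
noncomputable def c (k m n : ℕ) : ℕ := Pr (I k m n) (D k m n)

private lemma f_one_apply (n : ℕ) : f 1 n = n + 1 := rfl

private lemma f_step (i n : ℕ) : f (i + 2) n = (f (i + 1))^[Nat.sqrt n / 2] n := rfl

private lemma f_one_iter (l x : ℕ) : (f 1)^[l] x = x + l := by
  induction l with
  | zero => simp
  | succ l ih => rw [Function.iterate_succ_apply', ih, f_one_apply]; omega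

private lemma iter_ge {g : ℕ → ℕ} (hg : ∀ x, 4 ≤ x → x < g x) :
    ∀ (l n : ℕ), 4 ≤ n → n + l ≤ g^[l] n := by
  intro l
  induction l with
  | zero => intro n hn; simp
  | succ l ih =>
    intro n hn
    have h1 := ih n hn
    have h2 := hg (g^[l] n) (by omega)
    rw [Function.iterate_succ_apply']
    omega

private lemma lt_f : ∀ i n, 4 ≤ n → n < f (i + 1) n := by
  intro i
  induction i with
  | zero => intro n hn; rw [f_one_apply]; omega
  | succ i ih =>
    intro n hn
    have hc : 1 ≤ Nat.sqrt n / 2 := by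
      have h2 : 2 ≤ Nat.sqrt n := Nat.le_sqrt.mpr (by omega)
      omega
    have := iter_ge (fun x hx => ih x hx) (Nat.sqrt n / 2) n hn
    rw [f_step]
    omega

private lemma iter_mono {g : ℕ → ℕ} (hg : ∀ x, 4 ≤ x → x < g x)
    (hm : ∀ x y, 4 ≤ x → x ≤ y → g x ≤ g y) :
    ∀ (l x y : ℕ), 4 ≤ x → x ≤ y → g^[l] x ≤ g^[l] y := by
  intro l
  induction l with
  | zero => intro x y _ h; simpa using h
  | succ l ih =>
    intro x y hx hxy
    rw [Function.iterate_succ_apply', Function.iterate_succ_apply']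
    have h4 : 4 ≤ g^[l] x := by have := iter_ge hg l x hx; omega
    exact hm _ _ h4 (ih x y hx hxy)

private lemma iter_le_iter {g : ℕ → ℕ} (hg : ∀ x, 4 ≤ x → x < g x)
    {l l' : ℕ} (h : l ≤ l') (x : ℕ) (hx : 4 ≤ x) : g^[l] x ≤ g^[l'] x := by
  obtain ⟨e, rfl⟩ := Nat.exists_eq_add_of_le h
  rw [Nat.add_comm, Function.iterate_add_apply]
  have h4 : 4 ≤ g^[l] x := by have := iter_ge hg l x hx; omega
  have := iter_ge hg e (g^[l] x) h4
  omega

private lemma f_mono : ∀ i x y, 4 ≤ x → x ≤ y → f (i + 1) x ≤ f (i + 1) y := by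
  intro i
  induction i with
  | zero => intro x y _ h; rw [f_one_apply, f_one_apply]; omega
  | succ i ih =>
    intro x y hx hxy
    rw [f_step, f_step]
    have h1 := iter_mono (fun z hz => lt_f i z hz) ih (Nat.sqrt x / 2) x y hx hxy
    have h2 : Nat.sqrt x / 2 ≤ Nat.sqrt y / 2 :=
      Nat.div_le_div_right (Nat.sqrt_le_sqrt hxy)
    exact le_trans h1 (iter_le_iter (fun z hz => lt_f i z hz) h2 y (le_trans hx hxy))

private lemma f_succ_ge (i n : ℕ) (hn : 4 ≤ n) : f (i + 1) n ≤ f (i + 2) n := by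
  rw [f_step]
  have hc : 1 ≤ Nat.sqrt n / 2 := by
    have h2 : 2 ≤ Nat.sqrt n := Nat.le_sqrt.mpr (by omega)
    omega
  have := iter_le_iter (g := f (i + 1)) (fun z hz => lt_f i z hz) hc n hn
  simpa using this

private lemma f_index_mono : ∀ j i n, i ≤ j → 4 ≤ n → f (i + 1) n ≤ f (j + 1) n := by
  intro j
  induction j with
  | zero => intro i n hij hn; interval_cases i; exact le_refl _
  | succ j ih =>
    intro i n hij hn
    rcases Nat.lt_or_ge i (j + 1) with h | h
    · exact le_trans (ih i n (by omega) hn) (f_succ_ge j n hn)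
    · have : i = j + 1 := by omega
      subst this; exact le_refl _

private lemma orbit_sub (i N : ℕ) (hN : 4 ≤ N) :
    ∀ l, ∃ t, (f (i + 2))^[l] N = (f (i + 1))^[t] N := by
  intro l
  induction l with
  | zero => exact ⟨0, rfl⟩
  | succ l ih =>
    obtain ⟨t, ht⟩ := ih
    refine ⟨Nat.sqrt ((f (i + 1))^[t] N) / 2 + t, ?_⟩
    rw [Function.iterate_succ_apply', ht, Function.iterate_add_apply, f_step]

private lemma S_finite (i N m n : ℕ) (hN : 4 ≤ N) :
    {l : ℕ | m < (f (i + 1))^[l] N ∧ (f (i + 1))^[l] N ≤ n}.Finite := by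
  apply Set.Finite.subset (Set.finite_Iic n)
  intro l hl
  obtain ⟨_, h2⟩ := hl
  have := iter_ge (fun z hz => lt_f i z hz) l N hN
  simp only [Set.mem_Iic]
  omega

private lemma lt_f' {i : ℕ} (hi : 1 ≤ i) (n : ℕ) (hn : 4 ≤ n) : n < f i n := by
  obtain ⟨i', rfl⟩ : ∃ i', i = i' + 1 := ⟨i - 1, by omega⟩
  exact lt_f i' n hn

private lemma f_index_mono' {i j : ℕ} (hi : 1 ≤ i) (hij : i ≤ j) (n : ℕ) (hn : 4 ≤ n) :
    f i n ≤ f j n := by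
  obtain ⟨i', rfl⟩ : ∃ i', i = i' + 1 := ⟨i - 1, by omega⟩
  obtain ⟨j', rfl⟩ : ∃ j', j = j' + 1 := ⟨j - 1, by omega⟩
  exact f_index_mono j' i' n (by omega) hn

private lemma S_finite' {i : ℕ} (hi : 1 ≤ i) (N m n : ℕ) (hN : 4 ≤ N) :
    {l : ℕ | m < (f i)^[l] N ∧ (f i)^[l] N ≤ n}.Finite := by
  obtain ⟨i', rfl⟩ : ∃ i', i = i' + 1 := ⟨i - 1, by omega⟩
  exact S_finite i' N m n hN

private lemma d_pos_iff {k i : ℕ} (hi : 1 ≤ i) (m n : ℕ) (hN : 4 ≤ 4 * k ^ 2) :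
    0 < d k i m n ↔
      ∃ l, m < (f i)^[l] (4 * k ^ 2) ∧ (f i)^[l] (4 * k ^ 2) ≤ n := by
  rw [d, Set.ncard_pos (S_finite' hi (4 * k ^ 2) m n hN)]
  exact Iff.rfl

private lemma d_bound (k m n i0 : ℕ) (hi1 : 1 ≤ i0) (hN4 : 4 ≤ 4 * k ^ 2)
    (hm : 4 * k ^ 2 ≤ m) (hmn : m < n) (hd0 : 0 < d k i0 m n)
    (hd1 : ¬ 0 < d k (i0 + 1) m n) : d k i0 m n ≤ Nat.sqrt m / 2 - 1 := by
  rw [d_pos_iff (by omega) m n hN4] at hd1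
  push_neg at hd1
  obtain ⟨i', rfl⟩ : ∃ i', i0 = i' + 1 := ⟨i0 - 1, by omega⟩
  -- the f_{i0+1}-orbit: find the last point ≤ m
  have hBne : (0 : ℕ) ∈ {j : ℕ | (f (i' + 2))^[j] (4 * k ^ 2) ≤ m} := by
    simp only [Set.mem_setOf_eq, Function.iterate_zero_apply]; omega
  have hlt1 : ∀ z, 4 ≤ z → z < f (i' + 2) z := fun z hz => lt_f (i' + 1) z hz
  have hBbdd : BddAbove {j : ℕ | (f (i' + 2))^[j] (4 * k ^ 2) ≤ m} := by
    refine ⟨m, fun j hj => ?_⟩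
    have := iter_ge hlt1 j (4 * k ^ 2) hN4
    simp only [Set.mem_setOf_eq] at hj
    omega
  set j0 := sSup {j : ℕ | (f (i' + 2))^[j] (4 * k ^ 2) ≤ m} with hj0def
  have hj0mem : (f (i' + 2))^[j0] (4 * k ^ 2) ≤ m := Nat.sSup_mem ⟨0, hBne⟩ hBbdd
  have hj0succ : m < (f (i' + 2))^[j0 + 1] (4 * k ^ 2) := by
    by_contra hcon
    push_neg at hcon
    have : j0 + 1 ≤ j0 := le_csSup hBbdd hcon
    omega
  have hj0n : n < (f (i' + 2))^[j0 + 1] (4 * k ^ 2) := hd1 (j0 + 1) hj0succ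
  -- express the orbit points as f i0 iterates
  obtain ⟨t, ht⟩ := orbit_sub i' (4 * k ^ 2) hN4 j0
  set b := (f (i' + 1))^[t] (4 * k ^ 2) with hbdef
  set c0 := Nat.sqrt b / 2 with hc0def
  have hstep : (f (i' + 2))^[j0 + 1] (4 * k ^ 2) = (f (i' + 1))^[c0 + t] (4 * k ^ 2) := by
    rw [Function.iterate_succ_apply', ht, Function.iterate_add_apply, ← hbdef, f_step]
  have hbm : b ≤ m := ht ▸ hj0mem
  have hbn : n < (f (i' + 1))^[c0 + t] (4 * k ^ 2) := by rw [← hstep]; exact hj0n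
  have hbmm : (f (i' + 1))^[t] (4 * k ^ 2) ≤ m := hbm
  -- the counted set at level i0 is inside Ioo t (c0 + t)
  have hsub : {l : ℕ | m < (f (i' + 1))^[l] (4 * k ^ 2) ∧ (f (i' + 1))^[l] (4 * k ^ 2) ≤ n}
      ⊆ Set.Ioo t (c0 + t) := by
    rintro l ⟨hl1, hl2⟩
    constructor
    · by_contra hcon
      push_neg at hcon
      have := iter_le_iter (g := f (i' + 1)) (fun z hz => lt_f i' z hz) hcon
        (4 * k ^ 2) hN4
      omega
    · by_contra hcon
      push_neg at hcon
      have := iter_le_iter (g := f (i' + 1)) (fun z hz => lt_f i' z hz) hcon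
        (4 * k ^ 2) hN4
      omega
  have hdle : d k (i' + 1) m n ≤ c0 - 1 := by
    rw [d]
    have h1 := Set.ncard_le_ncard hsub (Set.finite_Ioo t (c0 + t))
    have h2 : (Set.Ioo t (c0 + t)).ncard = c0 - 1 := by
      simp only [Set.ncard_eq_toFinset_card', Set.toFinset_Ioo, Nat.card_Ioo]
      omega
    omega
  have hc0 : c0 ≤ Nat.sqrt m / 2 :=
    Nat.div_le_div_right (Nat.sqrt_le_sqrt hbm)
  omega

theorem c_regressive (k : ℕ) (hk : 2 < k) (m n : ℕ)
    (hm : 4 * k ^ 2 ≤ m) (hmn : m < n) (hn : n < f k (4 * k ^ 2)) :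
    c k m n < m := by
  have hk3 : 3 ≤ k := hk
  have hN36 : 36 ≤ 4 * k ^ 2 := by nlinarith
  have hN4 : 4 ≤ 4 * k ^ 2 := by omega
  set s := Nat.sqrt m with hsdef
  have hm36 : 36 ≤ m := le_trans hN36 hm
  have hs6 : 6 ≤ s := Nat.le_sqrt.mpr (by omega)
  have h2k : 2 * k ≤ s := Nat.le_sqrt.mpr (by nlinarith)
  have hss : s * s ≤ m := by
    have := Nat.sqrt_le' m
    nlinarith [this]
  have hone : (1 : ℕ) ∈ {i : ℕ | 1 ≤ i ∧ 0 < d k i m n} := by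
    refine ⟨le_refl 1, ?_⟩
    rw [d_pos_iff le_rfl m n hN4]
    exact ⟨m + 1 - 4 * k ^ 2, by rw [f_one_iter]; omega, by rw [f_one_iter]; omega⟩
  -- every member of Sset is < k
  have hmem_lt : ∀ i ∈ {i : ℕ | 1 ≤ i ∧ 0 < d k i m n}, i < k := by
    rintro i ⟨hi1, hdi⟩
    by_contra hcon
    push_neg at hcon
    rw [d_pos_iff hi1 m n hN4] at hdi
    obtain ⟨l, hl1, hl2⟩ := hdi
    rcases Nat.eq_zero_or_pos l with rfl | hl
    · simp at hl1; omega
    · have h1 : f i (4 * k ^ 2) ≤ (f i)^[l] (4 * k ^ 2) := by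
        have := iter_le_iter (g := f i) (fun z hz => lt_f' hi1 z hz) hl (4 * k ^ 2) hN4
        simpa using this
      have h2 : f k (4 * k ^ 2) ≤ f i (4 * k ^ 2) :=
        f_index_mono' (by omega) hcon (4 * k ^ 2) hN4
      omega
  have hne : Set.Nonempty {i : ℕ | 1 ≤ i ∧ 0 < d k i m n} := ⟨1, hone⟩
  have hbdd : BddAbove {i : ℕ | 1 ≤ i ∧ 0 < d k i m n} :=
    ⟨k, fun i hi => (hmem_lt i hi).le⟩
  have hImem : I k m n ∈ {i : ℕ | 1 ≤ i ∧ 0 < d k i m n} := by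
    rw [I]; exact Nat.sSup_mem hne hbdd
  obtain ⟨hi1, hd0⟩ := hImem
  have hik : I k m n < k := hmem_lt _ ⟨hi1, hd0⟩
  have hd1 : ¬ (0 < d k (I k m n + 1) m n) := by
    intro hpos
    have h : I k m n + 1 ≤ I k m n :=
      le_csSup hbdd (show I k m n + 1 ∈ {i : ℕ | 1 ≤ i ∧ 0 < d k i m n} from ⟨by omega, hpos⟩)
    omega
  have hdles : d k (I k m n) m n ≤ s / 2 - 1 :=
    d_bound k m n (I k m n) hi1 hN4 hm hmn hd0 hd1
  -- final arithmetic
  rw [c, Pr, D]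
  set i0 := I k m n with hi0def
  set d0 := d k i0 m n with hd0def
  have harg : i0 + d0 + 1 ≤ s - 1 := by omega
  have hch : (i0 + d0 + 1).choose 2 ≤ (s - 1).choose 2 := Nat.choose_le_choose 2 harg
  have h2c : (s - 1).choose 2 * 2 = (s - 1) * (s - 2) := by
    rw [Nat.choose_two_right]
    apply Nat.div_mul_cancel
    have heven : Even ((s - 2) * (s - 2 + 1)) := Nat.even_mul_succ_self (s - 2)
    have hrw : s - 2 + 1 = s - 1 := by omega
    rw [hrw] at heven
    have hss' : s - 1 - 1 = s - 2 := by omega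
    rw [hss', mul_comm]
    exact heven.two_dvd
  obtain ⟨u, hu⟩ : ∃ u, s = u + 6 := ⟨s - 6, by omega⟩
  have key : 2 * ((i0 + d0 + 1).choose 2 + d0) ≤ (u + 5) * (u + 4) + (u + 4) := by
    have h1 : (i0 + d0 + 1).choose 2 * 2 ≤ (u + 5) * (u + 4) := by
      have heq : (s - 1) * (s - 2) = (u + 5) * (u + 4) := by
        rw [hu]; congr 1 <;> omega
      omega
    have h2 : 2 * d0 ≤ u + 4 := by omega
    omega
  have hm' : (u + 6) * (u + 6) ≤ m := by rw [hu] at hss; exact hss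
  nlinarith [key, hm']
end

section
/- For all natural numbers n ≥ 16 and i ≥ 7, f_i(16n²) ≤ f_i^{(2)}(n), where f_i^{(2)} denotes the two-fold iterate of f_i. -/
theorem Monotone.iterate_apply_le_iterate_apply {α : Type*} [Preorder α] {g h : α → α}
    (hh : Monotone h) (hg : id ≤ g) {x : α} (hle : ∀ y, x ≤ y → h y ≤ g y) (j : ℕ) :
    h^[j] x ≤ g^[j] x := by
  induction j with
  | zero => rfl
  | succ j ih =>
    rw [Function.iterate_succ_apply', Function.iterate_succ_apply']
    exact (hh ih).trans (hle _ (Function.id_le_iterate_of_id_le hg j x))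

lemma f_succ {i : ℕ} (hi : 1 ≤ i) (n : ℕ) : f (i + 1) n = (f i)^[Nat.sqrt n / 2] n := by
  obtain ⟨j, rfl⟩ := Nat.exists_eq_add_of_le' hi
  rfl

lemma sqrt_div_two_le_of_le {m n : ℕ} (h : m ≤ n) : Nat.sqrt m / 2 ≤ Nat.sqrt n / 2 :=
  Nat.div_le_div_right (Nat.sqrt_le_sqrt h)

lemma id_le_f (i : ℕ) : id ≤ f i := by
  induction i with
  | zero => exact fun _ => le_rfl
  | succ i ih =>
    rcases Nat.eq_zero_or_pos i with rfl | hi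
    · exact fun n => Nat.le_succ n
    · intro n
      rw [f_succ hi]
      exact Function.id_le_iterate_of_id_le ih _ n

lemma monotone_f (i : ℕ) : Monotone (f i) := by
  induction i with
  | zero => exact monotone_id
  | succ i ih =>
    rcases Nat.eq_zero_or_pos i with rfl | hi
    · exact fun _ _ h => Nat.succ_le_succ h
    · intro a b hab
      rw [f_succ hi, f_succ hi]
      calc (f i)^[Nat.sqrt a / 2] a ≤ (f i)^[Nat.sqrt a / 2] b := ih.iterate _ hab
        _ ≤ (f i)^[Nat.sqrt b / 2] b :=
          Function.monotone_iterate_of_id_le (id_le_f i) (sqrt_div_two_le_of_le hab) b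

lemma iterate_le_f_succ {i m n : ℕ} (hi : 1 ≤ i) (hm : m ≤ Nat.sqrt n / 2) :
    (f i)^[m] n ≤ f (i + 1) n := by
  rw [f_succ hi]
  exact Function.monotone_iterate_of_id_le (id_le_f i) hm n

lemma f_f_le_f_succ {i n : ℕ} (hi : 1 ≤ i) (hn : 16 ≤ n) : f i (f i n) ≤ f (i + 1) n :=
  iterate_le_f_succ (m := 2) hi (by
    have : 4 ≤ Nat.sqrt n := Nat.le_sqrt.2 hn
    omega)

lemma f_le_f_succ {i n : ℕ} (hi : 1 ≤ i) (hn : 16 ≤ n) : f i n ≤ f (i + 1) n :=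
  (monotone_f i (id_le_f i n)).trans (f_f_le_f_succ hi hn)

lemma le_f_succ_of_le {i n a b : ℕ} (hi : 1 ≤ i) (hn : 16 ≤ n) (ha : a ≤ f i n)
    (hb : b ≤ f i a) : b ≤ f (i + 1) n :=
  hb.trans ((monotone_f i ha).trans (f_f_le_f_succ hi hn))

lemma iterate_le_f_succ_of_le {i n : ℕ} (hi : 1 ≤ i) {h : ℕ → ℕ} (hh : Monotone h)
    (hle : ∀ y, n ≤ y → h y ≤ f i y) : h^[Nat.sqrt n / 2] n ≤ f (i + 1) n := by
  rw [f_succ hi]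
  exact hh.iterate_apply_le_iterate_apply (id_le_f i) hle _

lemma f_two (n : ℕ) : f 2 n = n + Nat.sqrt n / 2 := by
  rw [f_succ le_rfl]
  change (· + 1)^[Nat.sqrt n / 2] n = _
  rw [add_right_iterate_apply, smul_eq_mul, mul_one]

lemma add_sq_le_f_three (n : ℕ) : n + (Nat.sqrt n / 2) ^ 2 ≤ f 3 n := by
  have key := iterate_le_f_succ_of_le (i := 2) (n := n) (by norm_num)
    (h := (· + Nat.sqrt n / 2)) (fun _ _ hab => Nat.add_le_add_right hab _)
    (fun y hy => (f_two y).symm ▸ Nat.add_le_add_left (sqrt_div_two_le_of_le hy) y)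
  rwa [add_right_iterate_apply, smul_eq_mul, ← sq] at key

lemma add_cube_le_f_four (n : ℕ) : n + (Nat.sqrt n / 2) ^ 3 ≤ f 4 n := by
  have key := iterate_le_f_succ_of_le (i := 3) (n := n) (by norm_num)
    (h := (· + (Nat.sqrt n / 2) ^ 2)) (fun _ _ hab => Nat.add_le_add_right hab _)
    (fun y hy => (Nat.add_le_add_left (Nat.pow_le_pow_left (sqrt_div_two_le_of_le hy) 2) y).trans
      (add_sq_le_f_three y))
  rwa [add_right_iterate_apply, smul_eq_mul, ← pow_succ'] at key

lemma le_cube_sqrt_div_two {n : ℕ} (hn : 256 ≤ n) : n ≤ (Nat.sqrt n / 2) ^ 3 := by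
  set s := Nat.sqrt n
  have hs : 16 ≤ s := Nat.le_sqrt.2 hn
  have hns : n < (s + 1) * (s + 1) := Nat.lt_succ_sqrt n
  set k := s / 2
  have hsk : s ≤ 2 * k + 1 := by omega
  have hk : 8 ≤ k := by omega
  have hnk : n ≤ 4 * k ^ 2 + 8 * k + 3 := by nlinarith
  have hk2 : 8 * k + 3 ≤ 4 * k ^ 2 := by nlinarith
  have hk3 : 8 * k ^ 2 ≤ k ^ 3 := by nlinarith
  omega

lemma two_mul_le_f_four {n : ℕ} (hn : 256 ≤ n) : 2 * n ≤ f 4 n := by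
  have := add_cube_le_f_four n
  have := le_cube_sqrt_div_two hn
  omega

lemma two_pow_mul_le_f_five {n : ℕ} (hn : 256 ≤ n) : 2 ^ (Nat.sqrt n / 2) * n ≤ f 5 n := by
  have key := iterate_le_f_succ_of_le (i := 4) (n := n) (by norm_num)
    (h := (2 * ·)) (fun _ _ hab => Nat.mul_le_mul_left 2 hab)
    (fun y hy => two_mul_le_f_four (hn.trans hy))
  rwa [mul_left_iterate_apply] at key

lemma mul_le_f_five {n : ℕ} (hn : 256 ≤ n) : 256 * n ≤ f 5 n := by
  refine le_trans (Nat.mul_le_mul_right n ?_) (two_pow_mul_le_f_five hn)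
  have : 16 ≤ Nat.sqrt n := Nat.le_sqrt.2 hn
  exact (Nat.pow_le_pow_right (by norm_num) (by omega : 8 ≤ Nat.sqrt n / 2) : 2 ^ 8 ≤ _)

lemma sixteen_mul_le_two_pow (n : ℕ) : 16 * n ≤ 2 ^ (8 * Nat.sqrt n) := by
  set s := Nat.sqrt n
  rcases Nat.eq_zero_or_pos s with hs | hs
  · simp [Nat.sqrt_eq_zero.1 hs]
  have hns : n < (s + 1) * (s + 1) := Nat.lt_succ_sqrt n
  have hs2 : s + 1 ≤ 2 ^ s := Nat.lt_two_pow_self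
  calc 16 * n ≤ 2 ^ 4 * (2 ^ s * 2 ^ s) := by
        have := Nat.mul_le_mul hs2 hs2
        omega
    _ = 2 ^ (2 * s + 4) := by ring
    _ ≤ 2 ^ (8 * s) := Nat.pow_le_pow_right (by norm_num) (by omega)

lemma sixteen_mul_sq_le_f_six {n : ℕ} (hn : 256 ≤ n) : 16 * n ^ 2 ≤ f 6 n := by
  set m := f 5 n
  have hnm : 256 * n ≤ m := mul_le_f_five hn
  have hsm : 16 * Nat.sqrt n ≤ Nat.sqrt m :=
    Nat.le_sqrt.2 (by nlinarith [Nat.sqrt_le' n])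
  calc 16 * n ^ 2 = 16 * n * n := by ring
    _ ≤ 2 ^ (Nat.sqrt m / 2) * m :=
        Nat.mul_le_mul ((sixteen_mul_le_two_pow n).trans
          (Nat.pow_le_pow_right (by norm_num) (by omega))) (by omega)
    _ ≤ f 5 m := two_pow_mul_le_f_five (by omega)
    _ ≤ f 6 n := f_f_le_f_succ (by norm_num) (by omega)

lemma two_pow_le_f_seven_sixteen : 2 ^ 24 ≤ f 7 16 := by
  -- `norm_num` evaluates `Nat.sqrt` on literals.
  have f4 : ∀ {n b : ℕ}, b ≤ n + (Nat.sqrt n / 2) ^ 3 → b ≤ f 4 n :=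
    fun h => h.trans (add_cube_le_f_four _)
  have h516 : 32 ≤ f 5 16 := le_f_succ_of_le (a := 24) (by norm_num) (by norm_num)
    (f4 (by norm_num)) (f4 (by norm_num))
  have h532 : 67 ≤ f 5 32 := le_f_succ_of_le (a := 40) (by norm_num) (by norm_num)
    (f4 (by norm_num)) (f4 (by norm_num))
  have h567 : 256 ≤ f 5 67 := le_f_succ_of_le (a := 131) (by norm_num) (by norm_num)
    (f4 (by norm_num)) (f4 (by norm_num))
  have h616 : 67 ≤ f 6 16 := le_f_succ_of_le (by norm_num) (by norm_num) h516 h532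
  have h667 : 2 ^ 24 ≤ f 6 67 := by
    have h5256 : 256 * 256 ≤ f 5 256 := mul_le_f_five le_rfl
    calc 2 ^ 24 ≤ 256 * f 5 256 := by omega
      _ ≤ f 5 (f 5 256) := mul_le_f_five (by omega)
      _ ≤ f 5 (f 5 (f 5 67)) := monotone_f 5 (monotone_f 5 h567)
      -- not `rfl`: the kernel would try to evaluate `f 5 67`
      _ = (f 5)^[3] 67 := by simp only [Function.iterate_succ_apply', Function.iterate_zero_apply]
      _ ≤ f 6 67 := iterate_le_f_succ (by norm_num) (by norm_num)
  exact le_f_succ_of_le (by norm_num) le_rfl h616 h667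

lemma sixteen_mul_sq_le_f_seven {n : ℕ} (hn : 16 ≤ n) : 16 * n ^ 2 ≤ f 7 n := by
  rcases le_or_gt 256 n with hn' | hn'
  · exact (sixteen_mul_sq_le_f_six hn').trans (f_le_f_succ (by norm_num) hn)
  · have : n ^ 2 ≤ 255 ^ 2 := Nat.pow_le_pow_left (by omega) 2
    have := two_pow_le_f_seven_sixteen.trans (monotone_f 7 hn)
    omega

lemma sixteen_mul_sq_le_f {i n : ℕ} (hi : 7 ≤ i) (hn : 16 ≤ n) : 16 * n ^ 2 ≤ f i n := by
  induction i, hi using Nat.le_induction with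
  | base => exact sixteen_mul_sq_le_f_seven hn
  | succ i hi ih => exact ih.trans (f_le_f_succ (by omega) hn)

theorem f_sixteen_sq_le_iterate (n i : ℕ) (hn : 16 ≤ n) (hi : 7 ≤ i) :
    f i (16 * n ^ 2) ≤ (f i)^[2] n :=
  monotone_f i (sixteen_mul_sq_le_f hi hn)
end

section
/- Let k > 5 and let N be a natural number such that every 2-coloring of the 3-element subsets of {1,2,...,N−1} admits a homogeneous set A with |A| ≥ k and |A| > min A + 1. Then every regressive coloring of the 2-element subsets of {1,2,...,N−1} admits a min-homogeneous subset of size k. -/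
/-!
Colour a triple `{x < y < z}` by whether `c x y = c x z`, i.e. by whether it is min-homogeneous,
and take a homogeneous set `A` with `min A + 1 < |A|`. If every triple of `A` were
non-min-homogeneous, `c (min A) ·` would be injective on the `|A| - 1` other elements of `A`,
while regressiveness confines its values to `{0, …, min A - 1}`; hence `|A| ≤ min A + 1`.
So all triples of `A` are min-homogeneous, and then so is `A` and each of its `k`-subsets.
-/

open Finset

section MinHomogeneous

variable {α β : Type*} [LinearOrder α] (c : α → α → β)

def IsMinHomogeneous (B : Finset α) : Prop :=
  ∀ m ∈ B, ∀ n ∈ B, ∀ n' ∈ B, m < n → m < n' → c m n = c m n'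

variable {c}

theorem IsMinHomogeneous.mono {A B : Finset α} (hA : IsMinHomogeneous c A) (hBA : B ⊆ A) :
    IsMinHomogeneous c B :=
  fun m hm n hn n' hn' => hA m (hBA hm) n (hBA hn) n' (hBA hn')

theorem isMinHomogeneous_triple {x y z : α} (hxy : x < y) (hyz : y < z) (h : c x y = c x z) :
    IsMinHomogeneous c {x, y, z} := by
  intro a ha b hb b' hb' hab hab'
  simp only [mem_insert, mem_singleton] at ha hb hb'
  rcases ha with rfl | rfl | rfl <;> rcases hb with rfl | rfl | rfl <;>
    rcases hb' with rfl | rfl | rfl <;> first | rfl | exact h | exact h.symm | order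

theorem IsMinHomogeneous.of_forall_triples {A : Finset α}
    (h : ∀ t ⊆ A, #t = 3 → IsMinHomogeneous c t) : IsMinHomogeneous c A := by
  intro m hm n hn n' hn' hmn hmn'
  obtain rfl | hne := eq_or_ne n n'
  · rfl
  have hsub : {m, n, n'} ⊆ A := by
    simp only [insert_subset_iff, singleton_subset_iff]
    exact ⟨hm, hn, hn'⟩
  exact h _ hsub (card_eq_three.2 ⟨m, n, n', hmn.ne, hmn'.ne, hne, rfl⟩)
    m (by simp) n (by simp) n' (by simp) hmn hmn'

theorem injOn_of_forall_triples_not_isMinHomogeneous {A : Finset α}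
    (h : ∀ t ⊆ A, #t = 3 → ¬IsMinHomogeneous c t) {m : α} (hm : m ∈ A) :
    Set.InjOn (c m) {n | n ∈ A ∧ m < n} := by
  have key : ∀ y ∈ A, ∀ z ∈ A, m < y → y < z → c m y ≠ c m z := by
    intro y hy z hz hmy hyz heq
    have hsub : {m, y, z} ⊆ A := by
      simp only [insert_subset_iff, singleton_subset_iff]
      exact ⟨hm, hy, hz⟩
    exact h _ hsub (card_eq_three.2 ⟨m, y, z, hmy.ne, (hmy.trans hyz).ne, hyz.ne, rfl⟩)
      (isMinHomogeneous_triple hmy hyz heq)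
  rintro y ⟨hy, hmy⟩ z ⟨hz, hmz⟩ heq
  by_contra hne
  rcases lt_or_gt_of_ne hne with hyz | hzy
  · exact key y hy z hz hmy hyz heq
  · exact key z hz y hy hmz hzy heq.symm

end MinHomogeneous

theorem card_le_min'_add_one_of_forall_triples_not_isMinHomogeneous {c : ℕ → ℕ → ℕ}
    {A : Finset ℕ} (hA : A.Nonempty) (hc : ∀ m ∈ A, ∀ n ∈ A, m < n → c m n < m)
    (h : ∀ t ⊆ A, #t = 3 → ¬IsMinHomogeneous c t) : #A ≤ A.min' hA + 1 := by
  set m := A.min' hA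
  have hmA : m ∈ A := A.min'_mem hA
  have hmaps : Set.MapsTo (c m) (A.erase m) (range m) := fun n hn =>
    mem_range.2 (hc m hmA n (mem_of_mem_erase hn) (A.min'_lt_of_mem_erase_min' hA hn))
  have hinj : Set.InjOn (c m) (A.erase m) :=
    (injOn_of_forall_triples_not_isMinHomogeneous h hmA).mono fun n (hn : n ∈ A.erase m) =>
      show n ∈ A ∧ m < n from ⟨mem_of_mem_erase hn, A.min'_lt_of_mem_erase_min' hA hn⟩
  have := card_le_card_of_injOn (c m) hmaps hinj
  rw [card_erase_of_mem hmA, card_range] at this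
  omega

theorem regressive_from_PH_triples_general (k N : ℕ)
    (hPH : ∀ col : Finset ℕ → Bool,
      ∃ A : Finset ℕ, A ⊆ Finset.Icc 1 (N - 1) ∧ k ≤ A.card ∧
        (∃ hA : A.Nonempty, A.min' hA + 1 < A.card) ∧
        ∃ b : Bool, ∀ t : Finset ℕ, t ⊆ A → t.card = 3 → col t = b) :
    ∀ c : ℕ → ℕ → ℕ,
      (∀ m n, m ∈ Finset.Icc 1 (N - 1) → n ∈ Finset.Icc 1 (N - 1) → m < n →
        c m n < m) →
      ∃ B : Finset ℕ, B ⊆ Finset.Icc 1 (N - 1) ∧ B.card = k ∧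
        ∀ m n n', m ∈ B → n ∈ B → n' ∈ B → m < n → m < n' → c m n = c m n' := by
  classical
  intro c hc
  obtain ⟨A, hAsub, hkA, ⟨hA, hmin⟩, b, hb⟩ := hPH fun t => decide (IsMinHomogeneous c t)
  have hAhom : IsMinHomogeneous c A := by
    cases b
    · have hcA : ∀ m ∈ A, ∀ n ∈ A, m < n → c m n < m := fun m hm n hn =>
        hc m n (hAsub hm) (hAsub hn)
      have := card_le_min'_add_one_of_forall_triples_not_isMinHomogeneous hA hcA
        fun t ht h3 => by simpa using hb t ht h3
      omega
    · exact .of_forall_triples fun t ht h3 => by simpa using hb t ht h3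
  obtain ⟨B, hBA, hBk⟩ := exists_subset_card_eq hkA
  exact ⟨B, hBA.trans hAsub, hBk, fun m n n' hm hn hn' => hAhom.mono hBA m hm n hn n' hn'⟩

theorem regressive_from_PH_triples (k N : ℕ) (hk : 5 < k)
    (hPH : ∀ col : Finset ℕ → Bool,
      ∃ A : Finset ℕ, A ⊆ Finset.Icc 1 (N - 1) ∧ k ≤ A.card ∧
        (∃ hA : A.Nonempty, A.min' hA + 1 < A.card) ∧
        ∃ b : Bool, ∀ t : Finset ℕ, t ⊆ A → t.card = 3 → col t = b) :
    ∀ c : ℕ → ℕ → ℕ,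
      (∀ m n, m ∈ Finset.Icc 1 (N - 1) → n ∈ Finset.Icc 1 (N - 1) → m < n →
        c m n < m) →
      ∃ B : Finset ℕ, B ⊆ Finset.Icc 1 (N - 1) ∧ B.card = k ∧
        ∀ m n n', m ∈ B → n ∈ B → n' ∈ B → m < n → m < n' → c m n = c m n' :=
  regressive_from_PH_triples_general k N hPH
end
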